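/- Let 0 < μ < L, Q = L/μ > 1, α = 1/L, β = (√Q − 1)/(√Q + 1). Let s ≥ 1 and k_1, …, k_s ≥ 1 be integers, set k = k_1 + ⋯ + k_s + s, and let T = B(L) B(μ)^{k_1} B(L) B(μ)^{k_2} ⋯ B(L) B(μ)^{k_s}. Then the spectral radius of T equals ((√Q − 1)/√Q)^k · k_1 k_2 ⋯ k_s. -/

import Mathlib

/-! With `α = 1/L` the matrix `B(L)` has zero trace and determinant, so it has rank one and
`B(L) X B(L) = tr (B(L) X) • B(L)` for every `X`. Hence `T` collapses to a scalar multiple of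
`B(L) B(μ)^{kₛ}`: it is singular, so its spectral radius is
`|tr T| = ∏ᵢ |tr (B(L) B(μ)^{kᵢ})|`.
The choice of `β` makes `r = (√Q - 1)/√Q` a double eigenvalue of `B(μ)`, so
`B(μ)^j = r^j • 1 + j r^(j-1) • (B(μ) - r • 1)` and `tr (B(L) B(μ)^j) = -j r^(j+1)`. -/

open Matrix

/-- The 2×2 matrix `B(λ)` from the analysis of Nesterov's method. -/
noncomputable def Bmat (α β lam : ℝ) : Matrix (Fin 2) (Fin 2) ℝ :=
  !![1 - α * (1 + β) * lam, β ^ 2; -(α * lam), β]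

/-- The spectral radius of a real square matrix: the maximum modulus of its complex
eigenvalues. -/
noncomputable def specRad {m : Type*} [Fintype m] [DecidableEq m]
    (A : Matrix m m ℝ) : ℝ :=
  sSup ((fun z : ℂ => ‖z‖) '' spectrum ℂ (A.map (algebraMap ℝ ℂ)))

section Algebra

variable {K R : Type*} [CommSemiring K] [Semiring R] [Algebra K R]

theorem smul_one_add_pow_succ_of_mul_self_eq_zero {N : R} (hN : N * N = 0) (r : K) (j : ℕ) :
    (r • 1 + N) ^ (j + 1) = r ^ (j + 1) • 1 + ((j + 1 : K) * r ^ j) • N := by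
  induction j with
  | zero => simp
  | succ j ih =>
    rw [pow_succ, ih]
    simp only [add_mul, mul_add, one_mul, mul_one, smul_mul_assoc, mul_smul_comm, hN, smul_zero,
      add_zero]
    push_cast
    module

theorem list_prod_ofFn_mul_eq_smul {n : ℕ} {a : R} {m : Fin (n + 1) → R} {c : Fin (n + 1) → K}
    (h : ∀ i, a * m i * a = c i • a) :
    (List.ofFn fun i => a * m i).prod = (∏ i : Fin n, c i.castSucc) • (a * m (Fin.last n)) := by
  induction n with
  | zero => simp
  | succ n ih =>
    rw [List.ofFn_succ', List.prod_concat, ih fun i => h i.castSucc, Fin.prod_univ_castSucc,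
      smul_mul_assoc, ← mul_assoc, h, smul_mul_assoc, smul_smul]

end Algebra

namespace Matrix

variable {K : Type*} [CommRing K]

theorem mul_mul_eq_trace_smul_of_det_eq_zero {A : Matrix (Fin 2) (Fin 2) K} (hA : A.det = 0)
    (X : Matrix (Fin 2) (Fin 2) K) : A * X * A = (A * X).trace • A := by
  rw [det_fin_two] at hA
  -- the `(i, j)` entry of `A X A - tr (A X) • A` is `± X j' i' * det A`, with `i' ≠ i`, `j' ≠ j`
  ext i j
  fin_cases i <;> fin_cases j <;>
    simp [mul_apply, Fin.sum_univ_two, trace_fin_two] <;>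
    [linear_combination -(X 1 1) * hA; linear_combination X 0 1 * hA;
      linear_combination X 1 0 * hA; linear_combination -(X 0 0) * hA]

theorem sub_smul_one_mul_self_eq_zero_of_trace_of_det {B : Matrix (Fin 2) (Fin 2) K} {r : K}
    (htr : B.trace = 2 * r) (hdet : B.det = r ^ 2) : (B - r • 1) * (B - r • 1) = 0 := by
  rw [trace_fin_two] at htr
  rw [det_fin_two] at hdet
  -- Cayley–Hamilton: `(B - r • 1)² = (tr B - 2r) • B + (r² - det B) • 1`
  ext i j
  fin_cases i <;> fin_cases j <;>
    simp [mul_apply, Fin.sum_univ_two, one_apply] <;>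
    [linear_combination B 0 0 * htr - hdet; linear_combination B 0 1 * htr;
      linear_combination B 1 0 * htr; linear_combination B 1 1 * htr - hdet]

theorem trace_mul_pow_succ_of_sub_smul_one_mul_self_eq_zero {n : Type*} [Fintype n]
    [DecidableEq n] {A B : Matrix n n K} {r : K} (hA : A.trace = 0)
    (hB : (B - r • 1) * (B - r • 1) = 0) (j : ℕ) :
    (A * B ^ (j + 1)).trace = (j + 1) * r ^ j * (A * B).trace := by
  obtain ⟨N, rfl⟩ : ∃ N, B = r • 1 + N := ⟨B - r • 1, by abel⟩
  rw [add_sub_cancel_left] at hB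
  simp [smul_one_add_pow_succ_of_mul_self_eq_zero hB, mul_add, hA, mul_assoc]

end Matrix

theorem specRad_eq_abs_trace_of_det_eq_zero {A : Matrix (Fin 2) (Fin 2) ℝ} (h : A.det = 0) :
    specRad A = |A.trace| := by
  have hspec : spectrum ℂ (A.map (algebraMap ℝ ℂ)) = {0, (A.trace : ℂ)} := by
    ext z
    rw [mem_spectrum_iff_isRoot_charpoly, charpoly_fin_two, ← AddMonoidHom.map_trace,
      ← RingHom.mapMatrix_apply, ← RingHom.map_det, h]
    simp [sq, ← sub_mul, sub_eq_zero, or_comm]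
  rw [specRad, hspec, Set.image_pair, norm_zero, Complex.norm_real, Real.norm_eq_abs, csSup_pair,
    sup_eq_right.mpr (abs_nonneg _)]

theorem specRad_list_prod_mul_pow {A B : Matrix (Fin 2) (Fin 2) ℝ} {r : ℝ} (hA_det : A.det = 0)
    (hA_trace : A.trace = 0) (hB : (B - r • 1) * (B - r • 1) = 0)
    (hAB : (A * B).trace = -r ^ 2) {n : ℕ} (ks : Fin (n + 1) → ℕ) :
    specRad (List.ofFn fun i => A * B ^ ks i).prod = ∏ i, (ks i * |r| ^ (ks i + 1)) := by
  have htrace : ∀ j : ℕ, (A * B ^ j).trace = -(j * r ^ (j + 1)) := by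
    rintro (_ | j)
    · simp [hA_trace]
    · rw [trace_mul_pow_succ_of_sub_smul_one_mul_self_eq_zero hA_trace hB, hAB]
      push_cast
      ring
  rw [list_prod_ofFn_mul_eq_smul (K := ℝ) fun i => mul_mul_eq_trace_smul_of_det_eq_zero hA_det _,
    specRad_eq_abs_trace_of_det_eq_zero (by simp [det_mul, hA_det]), trace_smul, smul_eq_mul,
    ← Fin.prod_univ_castSucc (f := fun i => (A * B ^ ks i).trace), Finset.abs_prod]
  simp [htrace, abs_mul, abs_pow]

theorem trace_Bmat (α β lam : ℝ) : (Bmat α β lam).trace = (1 + β) * (1 - α * lam) := by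
  rw [Bmat, trace_fin_two_of]; ring

theorem det_Bmat (α β lam : ℝ) : (Bmat α β lam).det = β * (1 - α * lam) := by
  rw [Bmat, det_fin_two_of]; ring

theorem trace_Bmat_mul_Bmat {α L : ℝ} (hL : α * L = 1) (β μ : ℝ) :
    (Bmat α β L * Bmat α β μ).trace = -(β * (1 - α * μ)) := by
  simp only [Bmat, mul_fin_two, trace_fin_two_of]
  linear_combination ((1 + β) ^ 2 * (α * μ) - (1 + β + β ^ 2)) * hL

theorem stmt4 (μ L : ℝ)
    (Q : ℝ) (hQ : Q = L / μ) (hQ1 : 1 < Q)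
    (α β : ℝ) (hα : α = 1 / L) (hβ : β = (Real.sqrt Q - 1) / (Real.sqrt Q + 1))
    (s : ℕ) (hs : 1 ≤ s) (ks : Fin s → ℕ)
    (k : ℕ) (hk : k = (∑ i, ks i) + s)
    (T : Matrix (Fin 2) (Fin 2) ℝ)
    (hT : T = (List.ofFn (fun i : Fin s => Bmat α β L * (Bmat α β μ) ^ (ks i))).prod) :
    specRad T = ((Real.sqrt Q - 1) / Real.sqrt Q) ^ k * ∏ i, (ks i : ℝ) := by
  set x := Real.sqrt Q
  have hx : 1 < x := Real.lt_sqrt_of_sq_lt (by linarith)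
  have hαL : α * L = 1 := by
    rw [hα, one_div_mul_cancel]
    rintro rfl
    rw [zero_div] at hQ
    linarith
  have hαμ : α * μ = 1 / x ^ 2 := by
    rw [Real.sq_sqrt (by linarith), hQ, hα, one_div_mul_eq_div, one_div_div]
  have hdet : β * (1 - α * μ) = ((x - 1) / x) ^ 2 := by
    rw [hβ, hαμ]; field_simp; ring
  have htrace : (1 + β) * (1 - α * μ) = 2 * ((x - 1) / x) := by
    rw [hβ, hαμ]; field_simp; ring
  have hBL_det : (Bmat α β L).det = 0 := by rw [det_Bmat, hαL, sub_self, mul_zero]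
  have hBL_trace : (Bmat α β L).trace = 0 := by rw [trace_Bmat, hαL, sub_self, mul_zero]
  have hBμ := sub_smul_one_mul_self_eq_zero_of_trace_of_det (B := Bmat α β μ)
    (by rw [trace_Bmat, htrace]) (by rw [det_Bmat, hdet])
  have hBLBμ : (Bmat α β L * Bmat α β μ).trace = -((x - 1) / x) ^ 2 := by
    rw [trace_Bmat_mul_Bmat hαL, hdet]
  obtain ⟨n, rfl⟩ : ∃ n, s = n + 1 := ⟨s - 1, by omega⟩
  rw [hT, specRad_list_prod_mul_pow hBL_det hBL_trace hBμ hBLBμ,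
    abs_of_nonneg (div_nonneg (by linarith) (by linarith)), Finset.prod_mul_distrib,
    Finset.prod_pow_eq_pow_sum, hk, Finset.sum_add_distrib]
  simp [mul_comm]
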